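/- arXiv:2512.16668 — 5 statements merged into one kernel-verified Lean document; each statement's English description precedes it below -/
import Mathlib

section
/- Let d ≥ 1 and let X be a symmetric d×d real matrix. Define F(p, X) := −tr(X) + ⟪p, X p⟫ / |p|² for p ∈ ℝ^d, p ≠ 0. Then the limit inferior of F(p, X) as p → 0 with p ≠ 0 equals −tr(X) + min over unit vectors v ∈ ℝ^d (|v| = 1) of ⟪v, X v⟫; that is, the lower semicontinuous envelope F_*(0, X) = −tr(X) + λ_min(X), where λ_min(X) is the smallest eigenvalue of X, characterized as the infimum of the quadratic form ⟪v, X v⟫ over the unit sphere. -/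
open Matrix Filter Topology

/-- The level-set mean curvature operator
`F(p, X) = -tr(X) + ⟪p, X p⟫ / |p|²` for `p ≠ 0`. -/
noncomputable def levelSetF (d : ℕ) (p : Fin d → ℝ) (X : Matrix (Fin d) (Fin d) ℝ) : ℝ :=
  -X.trace + (p ⬝ᵥ X.mulVec p) / (p ⬝ᵥ p)

/-- the liminf of `F(p, X)` as `p → 0`, `p ≠ 0`, equals
`-tr(X) + λ_min(X)`, where `λ_min(X)` is characterized as the infimum of the
quadratic form `⟪v, X v⟫` over the Euclidean unit sphere `{v : ⟪v,v⟫ = 1}`. -/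
theorem liminf_levelSetF_at_zero (d : ℕ) (hd : 1 ≤ d)
    (X : Matrix (Fin d) (Fin d) ℝ) (hX : X.IsSymm) :
    Filter.liminf (fun p => levelSetF d p X) (𝓝[≠] (0 : Fin d → ℝ)) =
      -X.trace + sInf {r : ℝ | ∃ v : Fin d → ℝ, v ⬝ᵥ v = 1 ∧ r = v ⬝ᵥ X.mulVec v} := by
  classical
  set Q : (Fin d → ℝ) → ℝ := fun v => v ⬝ᵥ X.mulVec v with hQdef
  set K : Set (Fin d → ℝ) := {v | v ⬝ᵥ v = 1} with hKdef
  have hQc : Continuous Q := by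
    simp only [hQdef, dotProduct, mulVec]
    fun_prop
  -- positivity of dot product
  have hpos : ∀ p : Fin d → ℝ, p ≠ 0 → 0 < p ⬝ᵥ p := by
    intro p hp
    rcases lt_or_eq_of_le (Finset.sum_nonneg fun i _ => mul_self_nonneg (p i)) with h | h
    · exact h
    · exfalso; apply hp
      funext i
      have := (Finset.sum_eq_zero_iff_of_nonneg
        (fun i _ => mul_self_nonneg (p i))).mp h.symm i (Finset.mem_univ i)
      exact mul_self_eq_zero.mp this
  -- K is compact
  have hKclosed : IsClosed K := isClosed_eq (by simp only [dotProduct]; fun_prop) continuous_const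
  have hKbdd : Bornology.IsBounded K := by
    apply Bornology.IsBounded.subset (Metric.isBounded_closedBall (x := (0 : Fin d → ℝ)) (r := 1))
    intro v hv
    simp only [Metric.mem_closedBall, dist_zero_right]
    rw [pi_norm_le_iff_of_nonneg (by norm_num)]
    intro i
    have h1 : v i * v i ≤ v ⬝ᵥ v :=
      Finset.single_le_sum (f := fun j => v j * v j)
        (fun j _ => mul_self_nonneg (v j)) (Finset.mem_univ i)
    rw [hv] at h1
    calc ‖v i‖ = |v i| := rfl
    _ ≤ 1 := abs_le_one_iff_mul_self_le_one.mpr h1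
  have hKcpt : IsCompact K := Metric.isCompact_of_isClosed_isBounded hKclosed hKbdd
  have hKne : K.Nonempty := by
    refine ⟨Pi.single (⟨0, hd⟩ : Fin d) 1, ?_⟩
    simp [hKdef, dotProduct, Pi.single_apply]
  obtain ⟨v0, hv0K, hmin⟩ := hKcpt.exists_isMinOn hKne hQc.continuousOn
  have hv0ne : v0 ≠ 0 := by
    intro h
    have : (0 : ℝ) = 1 := by simpa [h, hKdef] using hv0K
    norm_num at this
  -- the sInf equals Q v0
  have hsInf : sInf {r : ℝ | ∃ v : Fin d → ℝ, v ⬝ᵥ v = 1 ∧ r = v ⬝ᵥ X.mulVec v} = Q v0 := by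
    apply IsLeast.csInf_eq
    constructor
    · exact ⟨v0, hv0K, rfl⟩
    · rintro r ⟨v, hv, rfl⟩
      exact hmin hv
  -- scale invariance computations
  have hscale : ∀ (c : ℝ) (p : Fin d → ℝ), Q (c • p) = c ^ 2 * Q p := by
    intro c p
    simp [hQdef, mulVec_smul, smul_dotProduct, dotProduct_smul, smul_eq_mul]
    ring
  have hdotscale : ∀ (c : ℝ) (p : Fin d → ℝ), (c • p) ⬝ᵥ (c • p) = c ^ 2 * (p ⬝ᵥ p) := by
    intro c p
    simp [smul_dotProduct, dotProduct_smul, smul_eq_mul]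
    ring
  -- eventual lower bound
  have hLB : ∀ᶠ p in 𝓝[≠] (0 : Fin d → ℝ), -X.trace + Q v0 ≤ levelSetF d p X := by
    filter_upwards [self_mem_nhdsWithin] with p hp
    have hp' : p ≠ 0 := hp
    have hpp := hpos p hp'
    set c : ℝ := (Real.sqrt (p ⬝ᵥ p))⁻¹ with hc
    have hsq : c ^ 2 = (p ⬝ᵥ p)⁻¹ := by
      rw [hc, ← Real.sqrt_inv, Real.sq_sqrt (by positivity)]
    have hvK : (c • p) ∈ K := by
      simp only [hKdef, Set.mem_setOf_eq, hdotscale, hsq]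
      field_simp
    have h1 : Q v0 ≤ Q (c • p) := hmin hvK
    rw [hscale, hsq] at h1
    unfold levelSetF
    have : Q p / (p ⬝ᵥ p) = (p ⬝ᵥ p)⁻¹ * Q p := by rw [div_eq_inv_mul]
    rw [hQdef] at this
    rw [this]
    exact add_le_add (le_refl _) h1
  -- frequently equal
  have hcurve : Tendsto (fun t : ℝ => t • v0) (𝓝[≠] (0 : ℝ)) (𝓝[≠] (0 : Fin d → ℝ)) := by
    have h0 : Tendsto (fun t : ℝ => t • v0) (𝓝 0) (𝓝 0) := by
      have : Tendsto (fun t : ℝ => t • v0) (𝓝 0) (𝓝 ((0 : ℝ) • v0)) :=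
        (continuous_id.smul continuous_const).tendsto 0
      simpa using this
    apply tendsto_nhdsWithin_of_tendsto_nhds_of_eventually_within _
      (h0.mono_left nhdsWithin_le_nhds)
    filter_upwards [self_mem_nhdsWithin] with t ht
    simp only [Set.mem_compl_iff, Set.mem_singleton_iff]
    exact smul_ne_zero ht hv0ne
  have hfreq : ∃ᶠ p in 𝓝[≠] (0 : Fin d → ℝ), levelSetF d p X ≤ -X.trace + Q v0 := by
    apply hcurve.frequently
    apply Eventually.frequently
    filter_upwards [self_mem_nhdsWithin] with t ht
    have ht' : (t : ℝ) ≠ 0 := ht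
    have hv0dot : v0 ⬝ᵥ v0 = 1 := hv0K
    unfold levelSetF
    have h1 : (t • v0) ⬝ᵥ X.mulVec (t • v0) = t ^ 2 * Q v0 := hscale t v0
    have h2 : (t • v0) ⬝ᵥ (t • v0) = t ^ 2 := by rw [hdotscale, hv0dot, mul_one]
    rw [h1, h2, mul_comm, mul_div_assoc, div_self (pow_ne_zero 2 ht'), mul_one]
  rw [hsInf]
  apply le_antisymm
  · exact liminf_le_of_frequently_le hfreq ⟨-X.trace + Q v0, by
      rwa [eventually_map]⟩
  · exact le_liminf_of_le (IsCoboundedUnder.of_frequently_le hfreq) hLB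
end

section
/- Discrete minimizing-movement interpretation of the obstacle MBO scheme. Let ι be a finite type with N = |ι| ≥ 1, let h > 0, let Δ be a symmetric real ι×ι matrix, and set K := exp(−h·Δ) (matrix exponential). For u, v : ι → ℝ define b(u, v) := (1/(√h · N)) ∑_{x ∈ ι} u(x) · (K v)(x), E(u) := b(1 − u, 1 + u), and D(u, v) := b(u − v, u − v). Let Φ, Ψ ⊆ ι be disjoint sets; call u : ι → ℝ admissible if u takes values in {−1, 1}, u ≡ 1 on Φ and u ≡ −1 on Ψ. Let uℓ : ι → ℝ take values in {−1, 1}, and define v : ι → ℝ by v(x) = 1 if x ∈ Φ, v(x) = −1 if x ∈ Ψ, and otherwise v(x) = 1 if (K uℓ)(x) > 0 and v(x) = −1 if (K uℓ)(x) ≤ 0. Then v is admissible and for every admissible w one has E(v) + D(v, uℓ) ≤ E(w) + D(w, uℓ). -/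
open Matrix Finset

/-- The discrete heat operator `K = exp(-h Δ)` (matrix exponential). -/
noncomputable def heatK {ι : Type*} [Fintype ι] [DecidableEq ι]
    (h : ℝ) (Δ : Matrix ι ι ℝ) : Matrix ι ι ℝ :=
  NormedSpace.exp (-(h • Δ))

/-- The bilinear form `b(u, v) = (1/(√h N)) ∑_x u(x) (K v)(x)`. -/
noncomputable def bform {ι : Type*} [Fintype ι] [DecidableEq ι]
    (h : ℝ) (Δ : Matrix ι ι ℝ) (u v : ι → ℝ) : ℝ :=
  (1 / (Real.sqrt h * (Fintype.card ι : ℝ))) * ∑ x, u x * (heatK h Δ).mulVec v x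

/-- The thresholding energy `E(u) = b(1 - u, 1 + u)`. -/
noncomputable def energyE {ι : Type*} [Fintype ι] [DecidableEq ι]
    (h : ℝ) (Δ : Matrix ι ι ℝ) (u : ι → ℝ) : ℝ :=
  bform h Δ (fun x => 1 - u x) (fun x => 1 + u x)

/-- The induced squared distance `(1/2h) d²(u, v) = b(u - v, u - v)`. -/
noncomputable def distD {ι : Type*} [Fintype ι] [DecidableEq ι]
    (h : ℝ) (Δ : Matrix ι ι ℝ) (u v : ι → ℝ) : ℝ :=
  bform h Δ (fun x => u x - v x) (fun x => u x - v x)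

/-- `u` is admissible: `±1`-valued, `≡ 1` on `Φ` and `≡ -1` on `Ψ`. -/
def Admissible {ι : Type*} (Φ Ψ : Set ι) (u : ι → ℝ) : Prop :=
  (∀ x, u x = 1 ∨ u x = -1) ∧ (∀ x ∈ Φ, u x = 1) ∧ (∀ x ∈ Ψ, u x = -1)

lemma heatK_isSymm {ι : Type*} [Fintype ι] [DecidableEq ι]
    (h : ℝ) (Δ : Matrix ι ι ℝ) (hΔ : Δ.IsSymm) : (heatK h Δ).IsSymm := by
  apply Matrix.IsSymm.exp
  unfold Matrix.IsSymm
  rw [Matrix.transpose_neg, Matrix.transpose_smul, hΔ.eq]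

lemma sum_mulVec_symm {ι : Type*} [Fintype ι] {K : Matrix ι ι ℝ} (hK : K.IsSymm)
    (a b : ι → ℝ) :
    ∑ x, a x * K.mulVec b x = ∑ x, b x * K.mulVec a x := by
  simp only [Matrix.mulVec, dotProduct, Finset.mul_sum]
  rw [Finset.sum_comm]
  refine Finset.sum_congr rfl fun x _ => Finset.sum_congr rfl fun y _ => ?_
  rw [hK.apply x y]; ring

/-- The key identity: `E(u) + D(u, uℓ)` equals a constant (in `u`) minus
`2c ∑ u (K uℓ)`. -/
lemma energy_plus_dist {ι : Type*} [Fintype ι] [DecidableEq ι]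
    (h : ℝ) (Δ : Matrix ι ι ℝ) (hΔ : Δ.IsSymm) (u uℓ : ι → ℝ) :
    energyE h Δ u + distD h Δ u uℓ =
      (1 / (Real.sqrt h * (Fintype.card ι : ℝ))) *
        ((∑ x, (heatK h Δ).mulVec (fun _ => 1) x + ∑ x, uℓ x * (heatK h Δ).mulVec uℓ x)
          - 2 * ∑ x, u x * (heatK h Δ).mulVec uℓ x) := by
  have hK := heatK_isSymm h Δ hΔ
  set K := heatK h Δ with hKdef
  have h1 : (fun x => 1 + u x) = (fun _ => (1:ℝ)) + u := rfl
  have h2 : (fun x => u x - uℓ x) = u - uℓ := rfl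
  have symm1 : ∑ x, u x * K.mulVec (fun _ => (1:ℝ)) x = ∑ x, K.mulVec u x := by
    rw [sum_mulVec_symm hK]; simp
  have symm2 : ∑ x, uℓ x * K.mulVec u x = ∑ x, u x * K.mulVec uℓ x :=
    sum_mulVec_symm hK uℓ u
  simp only [energyE, distD, bform, ← hKdef, h1, h2, Matrix.mulVec_add, Matrix.mulVec_sub,
    Pi.add_apply, Pi.sub_apply]
  rw [← mul_add]
  congr 1
  have expand : ∀ x, (1 - u x) * (K.mulVec (fun _ => (1:ℝ)) x + K.mulVec u x)
      + (u x - uℓ x) * (K.mulVec u x - K.mulVec uℓ x)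
      = (K.mulVec (fun _ => (1:ℝ)) x + K.mulVec u x - u x * K.mulVec (fun _ => (1:ℝ)) x
          - u x * K.mulVec uℓ x) + (uℓ x * K.mulVec uℓ x - uℓ x * K.mulVec u x) := by
    intro x; ring
  rw [← Finset.sum_add_distrib]
  simp only [expand]
  rw [Finset.sum_add_distrib]
  have e1 : ∑ x, (K.mulVec (fun _ => (1:ℝ)) x + K.mulVec u x
      - u x * K.mulVec (fun _ => (1:ℝ)) x - u x * K.mulVec uℓ x)
      = ∑ x, K.mulVec (fun _ => (1:ℝ)) x - ∑ x, u x * K.mulVec uℓ x := by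
    simp only [Finset.sum_sub_distrib, Finset.sum_add_distrib, symm1]; ring
  have e2 : ∑ x, (uℓ x * K.mulVec uℓ x - uℓ x * K.mulVec u x)
      = ∑ x, uℓ x * K.mulVec uℓ x - ∑ x, u x * K.mulVec uℓ x := by
    simp only [Finset.sum_sub_distrib, symm2]
  rw [e1, e2]; ring

/-- discrete minimizing-movement interpretation of the obstacle MBO
scheme.  The obstacle MBO update `v` of a `±1`-valued state `uℓ` is admissible and
minimizes `E(·) + D(·, uℓ)` among all admissible competitors. -/
theorem obstacleMBO_minimizing_movement {ι : Type*} [Fintype ι] [DecidableEq ι]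
    (h : ℝ) (hh : 0 < h) (hN : 1 ≤ Fintype.card ι)
    (Δ : Matrix ι ι ℝ) (hΔ : Δ.IsSymm)
    (Φ Ψ : Set ι) [DecidablePred (· ∈ Φ)] [DecidablePred (· ∈ Ψ)]
    (hdisj : Disjoint Φ Ψ)
    (uℓ : ι → ℝ) (huℓ : ∀ x, uℓ x = 1 ∨ uℓ x = -1)
    (v : ι → ℝ)
    (hv : ∀ x, v x = if x ∈ Φ then 1 else if x ∈ Ψ then (-1 : ℝ)
        else if 0 < (heatK h Δ).mulVec uℓ x then 1 else -1) :
    Admissible Φ Ψ v ∧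
      ∀ w : ι → ℝ, Admissible Φ Ψ w →
        energyE h Δ v + distD h Δ v uℓ ≤ energyE h Δ w + distD h Δ w uℓ := by
  have hadm : Admissible Φ Ψ v := by
    refine ⟨fun x => ?_, fun x hx => ?_, fun x hx => ?_⟩
    · rw [hv x]; split_ifs <;> simp
    · rw [hv x]; simp [hx]
    · have hxΦ : x ∉ Φ := fun hxΦ => Set.disjoint_left.mp hdisj hxΦ hx
      rw [hv x]; simp [hx, hxΦ]
  refine ⟨hadm, fun w hw => ?_⟩
  rw [energy_plus_dist h Δ hΔ v uℓ, energy_plus_dist h Δ hΔ w uℓ]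
  set K := heatK h Δ
  have hc : 0 < 1 / (Real.sqrt h * (Fintype.card ι : ℝ)) := by
    apply div_pos one_pos
    apply mul_pos (Real.sqrt_pos.mpr hh)
    exact_mod_cast Nat.lt_of_lt_of_le Nat.zero_lt_one hN
  have hsum : ∑ x, w x * K.mulVec uℓ x ≤ ∑ x, v x * K.mulVec uℓ x := by
    apply Finset.sum_le_sum
    intro x _
    set t := K.mulVec uℓ x
    by_cases hxΦ : x ∈ Φ
    · rw [hw.2.1 x hxΦ, hv x]; simp [hxΦ]
    by_cases hxΨ : x ∈ Ψ
    · rw [hw.2.2 x hxΨ, hv x]; simp [hxΦ, hxΨ]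
    rw [hv x]
    simp only [hxΦ, hxΨ, if_false]
    rcases hw.1 x with hwx | hwx <;> rw [hwx] <;> split_ifs with ht <;> nlinarith
  have := mul_le_mul_of_nonneg_left hsum (le_of_lt hc)
  nlinarith [this]
end

section
/- The iterates of the obstacle MBO scheme stay bounded. Let d ≥ 1, h > 0, R > 0, let G_h(z) = (4πh)^{−d/2} exp(−|z|²/(4h)) be the Gaussian heat kernel and (G_h ⋆ u)(x) = ∫ G_h(x − y) u(y) dy. Let Ω₀, Φ, Ψ ⊆ ℝ^d be measurable sets with Φ ⊆ Ω₀, Ψ ⊆ Ω₀ᶜ, Φ ∩ Ψ = ∅, and Ω₀ contained in the closed ball of radius R centered at 0. Define u⁰(x) := 1 if x ∈ Ω₀ and −1 otherwise, and inductively u^{ℓ+1} := S_h(u^ℓ) where S_h(u)(x) := 1 if x ∈ Φ; −1 if x ∈ Ψ; otherwise 1 if (G_h ⋆ u)(x) > 0 and −1 if (G_h ⋆ u)(x) ≤ 0. Then for every ℓ ∈ ℕ the set {x ∈ ℝ^d : u^ℓ(x) = 1} is contained in the closed ball of radius R centered at 0. -/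
open MeasureTheory Real

/-- The Gaussian heat kernel `G_h(z) = (4πh)^{-d/2} exp(-|z|²/(4h))`. -/
noncomputable def heatKernel (d : ℕ) (h : ℝ) (z : EuclideanSpace ℝ (Fin d)) : ℝ :=
  (4 * π * h) ^ (-(d : ℝ) / 2) * Real.exp (-‖z‖ ^ 2 / (4 * h))

/-- Convolution with the Gaussian heat kernel, `(G_h ⋆ u)(x) = ∫ G_h(x - y) u(y) dy`. -/
noncomputable def heatConv (d : ℕ) (h : ℝ) (u : EuclideanSpace ℝ (Fin d) → ℝ)
    (x : EuclideanSpace ℝ (Fin d)) : ℝ :=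
  ∫ y, heatKernel d h (x - y) * u y

open Classical in
/-- One step of the obstacle MBO scheme: the value is `1` on the inner obstacle `Φ`,
`-1` on the outer obstacle `Ψ`, and elsewhere the thresholded heat evolution. -/
noncomputable def mboStep (d : ℕ) (h : ℝ) (Φ Ψ : Set (EuclideanSpace ℝ (Fin d)))
    (u : EuclideanSpace ℝ (Fin d) → ℝ) (x : EuclideanSpace ℝ (Fin d)) : ℝ :=
  if x ∈ Φ then 1 else if x ∈ Ψ then -1 else
    if 0 < heatConv d h u x then 1 else -1

section Aux

open RealInnerProductSpace

variable {d : ℕ} {h : ℝ}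

lemma heatKernel_nonneg (hh : 0 < h) (z : EuclideanSpace ℝ (Fin d)) :
    0 ≤ heatKernel d h z := by
  unfold heatKernel; positivity

lemma heatKernel_continuous (d : ℕ) (h : ℝ) : Continuous (heatKernel d h) := by
  unfold heatKernel; fun_prop

lemma heatKernel_neg (z : EuclideanSpace ℝ (Fin d)) :
    heatKernel d h (-z) = heatKernel d h z := by
  simp [heatKernel]

lemma heatKernel_integrable (hh : 0 < h) : Integrable (heatKernel d h) := by
  have hb : (0:ℝ) < 1/(4*h) := by positivity
  have h0 := GaussianFourier.integrable_cexp_neg_mul_sq_norm_add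
      (V := EuclideanSpace ℝ (Fin d)) (b := ((1/(4*h) : ℝ) : ℂ)) (by simpa using hb) 0 0
  have h2 := h0.norm
  simp only [Complex.norm_exp, zero_mul, add_zero,
    ← Complex.ofReal_pow, ← Complex.ofReal_neg, ← Complex.ofReal_mul, Complex.ofReal_re] at h2
  have heq : (heatKernel d h) = fun z : EuclideanSpace ℝ (Fin d) =>
      (4 * π * h) ^ (-(d:ℝ)/2) * Real.exp (-(1/(4*h)) * ‖z‖ ^ 2) := by
    funext z; unfold heatKernel; ring_nf
  rw [heq]
  exact h2.const_mul _

lemma integrable_mul_bdd (hh : 0 < h) {g : EuclideanSpace ℝ (Fin d) → ℝ}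
    (hg : Measurable g) (hb : ∀ y, ‖g y‖ ≤ 1) :
    Integrable (fun z => heatKernel d h z * g z) := by
  refine Integrable.mono' (heatKernel_integrable hh)
    (((heatKernel_continuous d h).measurable.mul hg).aestronglyMeasurable)
    (Filter.Eventually.of_forall fun z => ?_)
  rw [norm_mul]
  calc ‖heatKernel d h z‖ * ‖g z‖ ≤ ‖heatKernel d h z‖ * 1 :=
        mul_le_mul_of_nonneg_left (hb z) (norm_nonneg _)
    _ = heatKernel d h z := by rw [mul_one, Real.norm_of_nonneg (heatKernel_nonneg hh z)]

lemma integrable_conv_bdd (hh : 0 < h) {g : EuclideanSpace ℝ (Fin d) → ℝ}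
    (hg : Measurable g) (hb : ∀ y, ‖g y‖ ≤ 1) (x : EuclideanSpace ℝ (Fin d)) :
    Integrable (fun y => heatKernel d h (x - y) * g y) := by
  refine Integrable.mono' ((heatKernel_integrable hh).comp_sub_left x)
    ((((heatKernel_continuous d h).comp (continuous_const.sub continuous_id)).measurable.mul
      hg).aestronglyMeasurable)
    (Filter.Eventually.of_forall fun y => ?_)
  rw [norm_mul]
  calc ‖heatKernel d h (x - y)‖ * ‖g y‖ ≤ ‖heatKernel d h (x - y)‖ * 1 :=
        mul_le_mul_of_nonneg_left (hb y) (norm_nonneg _)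
    _ = heatKernel d h (x - y) := by rw [mul_one, Real.norm_of_nonneg (heatKernel_nonneg hh _)]

/-- Key comparison with half-space data: if the phase of a `±1`-valued function is
contained in the ball of radius `R`, the heat convolution is nonpositive outside. -/
lemma heatConv_nonpos_outside (hh : 0 < h) {R : ℝ}
    {u : EuclideanSpace ℝ (Fin d) → ℝ} (hum : Measurable u)
    (huv : ∀ y, u y = 1 ∨ u y = -1)
    (hphase : {y | u y = 1} ⊆ Metric.closedBall 0 R)
    {x : EuclideanSpace ℝ (Fin d)} (hx : R < ‖x‖) (hR : 0 ≤ R) :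
    heatConv d h u x ≤ 0 := by
  have hx0 : x ≠ 0 := by
    intro hc; rw [hc, norm_zero] at hx; linarith
  set e : EuclideanSpace ℝ (Fin d) := ‖x‖⁻¹ • x with he
  have hnx : ‖x‖ ≠ 0 := norm_ne_zero_iff.mpr hx0
  have hex : ⟪e, x⟫ = ‖x‖ := by
    rw [he, real_inner_smul_left, real_inner_self_eq_norm_sq]
    field_simp
  have hne : ‖e‖ = 1 := by
    rw [he, norm_smul, norm_inv, norm_norm, inv_mul_cancel₀ hnx]
  -- the comparison half-space function
  set σ : EuclideanSpace ℝ (Fin d) → ℝ := fun z => if 0 < ⟪e, z⟫ then 1 else -1 with hσ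
  have hσm : Measurable σ := by
    refine Measurable.ite (measurableSet_lt measurable_const ?_) measurable_const
      measurable_const
    exact (continuous_const.inner continuous_id).measurable
  have hσb : ∀ z, ‖σ z‖ ≤ 1 := by
    intro z; rw [hσ]; dsimp only; split_ifs <;> simp
  have hub : ∀ y, ‖u y‖ ≤ 1 := by
    intro y; rcases huv y with h1 | h1 <;> rw [h1] <;> simp
  -- pointwise domination u y ≤ σ (x - y)
  have hdom : ∀ y, u y ≤ σ (x - y) := by
    intro y
    rcases huv y with h1 | h1
    · have hy : y ∈ Metric.closedBall 0 R := hphase h1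
      rw [Metric.mem_closedBall, dist_zero_right] at hy
      have hey : ⟪e, y⟫ ≤ R := by
        calc ⟪e, y⟫ ≤ ‖e‖ * ‖y‖ := real_inner_le_norm e y
          _ = ‖y‖ := by rw [hne, one_mul]
          _ ≤ R := hy
      have hpos : 0 < ⟪e, x - y⟫ := by
        rw [inner_sub_right, hex]; linarith
      rw [h1]; simp only [hσ]; rw [if_pos hpos]
    · have : (-1 : ℝ) ≤ σ (x - y) := by
        rw [hσ]; dsimp only; split_ifs <;> norm_num
      rw [h1]; exact this
  -- integrability
  have int_u : Integrable (fun y => heatKernel d h (x - y) * u y) :=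
    integrable_conv_bdd hh hum hub x
  have int_σconv : Integrable (fun y => heatKernel d h (x - y) * σ (x - y)) := by
    have : Integrable (fun z => heatKernel d h z * σ z) := integrable_mul_bdd hh hσm hσb
    exact this.comp_sub_left x
  have int_σ : Integrable (fun z => heatKernel d h z * σ z) := integrable_mul_bdd hh hσm hσb
  have int_σneg : Integrable (fun z => heatKernel d h z * σ (-z)) :=
    integrable_mul_bdd hh (hσm.comp measurable_neg) (fun z => hσb (-z))
  -- step 1: monotonicity
  have step1 : heatConv d h u x ≤ ∫ y, heatKernel d h (x - y) * σ (x - y) := by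
    refine integral_mono int_u int_σconv fun y => ?_
    exact mul_le_mul_of_nonneg_left (hdom y) (heatKernel_nonneg hh _)
  -- step 2: substitution z = x - y
  have step2 : (∫ y, heatKernel d h (x - y) * σ (x - y))
      = ∫ z, heatKernel d h z * σ z :=
    integral_sub_left_eq_self (fun z => heatKernel d h z * σ z) volume x
  -- step 3: reflection
  have step3 : (∫ z, heatKernel d h z * σ z) = ∫ z, heatKernel d h z * σ (-z) := by
    have := integral_neg_eq_self (fun w => heatKernel d h w * σ (-w)) volume
    calc (∫ z, heatKernel d h z * σ z)
        = ∫ z, heatKernel d h (-z) * σ (- -z) := by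
          congr 1; funext z; rw [heatKernel_neg, neg_neg]
      _ = ∫ z, heatKernel d h z * σ (-z) := this
  -- step 4: the sum is nonpositive
  have hsum : ∀ z, σ z + σ (-z) ≤ 0 := by
    intro z
    rw [hσ]; dsimp only
    rw [inner_neg_right]
    split_ifs <;> linarith
  have step4 : (∫ z, heatKernel d h z * σ z) + (∫ z, heatKernel d h z * σ (-z)) ≤ 0 := by
    rw [← integral_add int_σ int_σneg]
    refine integral_nonpos fun z => ?_
    have := mul_nonpos_of_nonneg_of_nonpos (heatKernel_nonneg hh z) (hsum z)
    calc heatKernel d h z * σ z + heatKernel d h z * σ (-z)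
        = heatKernel d h z * (σ z + σ (-z)) := by ring
      _ ≤ 0 := this
  have : (2 : ℝ) * ∫ z, heatKernel d h z * σ z ≤ 0 := by
    rw [two_mul]
    calc (∫ z, heatKernel d h z * σ z) + ∫ z, heatKernel d h z * σ z
        = (∫ z, heatKernel d h z * σ z) + ∫ z, heatKernel d h z * σ (-z) := by rw [← step3]
      _ ≤ 0 := step4
  have hI : (∫ z, heatKernel d h z * σ z) ≤ 0 := by linarith
  calc heatConv d h u x ≤ ∫ y, heatKernel d h (x - y) * σ (x - y) := step1
    _ = ∫ z, heatKernel d h z * σ z := step2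
    _ ≤ 0 := hI

lemma heatConv_measurable (hh : 0 < h) {u : EuclideanSpace ℝ (Fin d) → ℝ}
    (hum : Measurable u) : Measurable (heatConv d h u) := by
  have hf : StronglyMeasurable
      (fun p : EuclideanSpace ℝ (Fin d) × EuclideanSpace ℝ (Fin d) =>
        heatKernel d h (p.1 - p.2) * u p.2) := by
    exact (((heatKernel_continuous d h).measurable.comp
      (measurable_fst.sub measurable_snd)).mul (hum.comp measurable_snd)).stronglyMeasurable
  exact hf.integral_prod_right'.measurable

end Aux

/-- the iterates of the obstacle MBO scheme stay bounded: if the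
initial phase `Ω₀` is contained in the closed ball of radius `R`, so are the
phases `{u^ℓ = 1}` of all iterates `u^{ℓ+1} = S_h(u^ℓ)`. -/
theorem mbo_iterates_stay_bounded (d : ℕ) (hd : 1 ≤ d) (h R : ℝ) (hh : 0 < h) (hR : 0 < R)
    (Ω₀ Φ Ψ : Set (EuclideanSpace ℝ (Fin d)))
    (hΩ₀m : MeasurableSet Ω₀) (hΦm : MeasurableSet Φ) (hΨm : MeasurableSet Ψ)
    (hΦΩ : Φ ⊆ Ω₀) (hΨΩ : Ψ ⊆ Ω₀ᶜ) (hdisj : Φ ∩ Ψ = ∅)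
    (hball : Ω₀ ⊆ Metric.closedBall 0 R)
    (u0 : EuclideanSpace ℝ (Fin d) → ℝ)
    (hu0in : ∀ x ∈ Ω₀, u0 x = 1) (hu0out : ∀ x ∉ Ω₀, u0 x = -1) :
    ∀ ℓ : ℕ, {x | (mboStep d h Φ Ψ)^[ℓ] u0 x = 1} ⊆ Metric.closedBall 0 R := by
  suffices H : ∀ ℓ : ℕ, Measurable ((mboStep d h Φ Ψ)^[ℓ] u0) ∧
      (∀ x, (mboStep d h Φ Ψ)^[ℓ] u0 x = 1 ∨ (mboStep d h Φ Ψ)^[ℓ] u0 x = -1) ∧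
      {x | (mboStep d h Φ Ψ)^[ℓ] u0 x = 1} ⊆ Metric.closedBall 0 R by
    exact fun ℓ => (H ℓ).2.2
  intro ℓ
  induction ℓ with
  | zero =>
    refine ⟨?_, ?_, ?_⟩
    · classical
      have heq : u0 = fun x => if x ∈ Ω₀ then (1:ℝ) else -1 := by
        funext x
        split_ifs with hx
        · exact hu0in x hx
        · exact hu0out x hx
      rw [show ((mboStep d h Φ Ψ)^[0] u0) = u0 from rfl, heq]
      exact Measurable.ite hΩ₀m measurable_const measurable_const
    · intro x
      simp only [Function.iterate_zero_apply]
      by_cases hx : x ∈ Ω₀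
      · exact Or.inl (hu0in x hx)
      · exact Or.inr (hu0out x hx)
    · intro x hx
      simp only [Function.iterate_zero_apply, Set.mem_setOf_eq] at hx
      by_cases hxΩ : x ∈ Ω₀
      · exact hball hxΩ
      · rw [hu0out x hxΩ] at hx; norm_num at hx
  | succ n ih =>
    obtain ⟨ihm, ihv, ihp⟩ := ih
    set u := (mboStep d h Φ Ψ)^[n] u0 with hu
    have hstep : (mboStep d h Φ Ψ)^[n+1] u0 = mboStep d h Φ Ψ u := by
      rw [Function.iterate_succ_apply']
    rw [hstep]
    have hcm : Measurable (heatConv d h u) := heatConv_measurable hh ihm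
    refine ⟨?_, ?_, ?_⟩
    · classical
      unfold mboStep
      refine Measurable.ite hΦm measurable_const
        (Measurable.ite hΨm measurable_const
          (Measurable.ite ?_ measurable_const measurable_const))
      exact measurableSet_lt measurable_const hcm
    · intro x
      unfold mboStep
      split_ifs <;> simp
    · intro x hx
      simp only [Set.mem_setOf_eq] at hx
      unfold mboStep at hx
      by_cases h1 : x ∈ Φ
      · exact hball (hΦΩ h1)
      · rw [if_neg h1] at hx
        by_cases h2 : x ∈ Ψ
        · rw [if_pos h2] at hx; norm_num at hx
        · rw [if_neg h2] at hx
          by_cases h3 : 0 < heatConv d h u x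
          · -- must show x in the ball; otherwise the key lemma gives a contradiction
            by_contra hxb
            rw [Metric.mem_closedBall, dist_zero_right, not_le] at hxb
            have := heatConv_nonpos_outside hh ihm ihv ihp hxb hR.le
            linarith
          · rw [if_neg h3] at hx; norm_num at hx
end

section
/- Weak L² convergence of indicator-valued functions implies strong L¹ convergence. Let (Ω, μ) be a finite measure space and let f, f₁, f₂, … : Ω → ℝ be measurable functions taking values in {0, 1} μ-almost everywhere, with f_n converging weakly to f in L²(μ), i.e. ∫ f_n g dμ → ∫ f g dμ for every g ∈ L²(μ). Then ∫ |f_n − f| dμ → 0 as n → ∞. Equivalently, writing f_n = 1_{A_n} and f = 1_A for measurable sets A_n, A ⊆ Ω, one has μ(A_n Δ A) → 0, where Δ denotes the symmetric difference. -/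
open MeasureTheory Filter Topology

/-- weak `L²` convergence of `{0,1}`-valued (indicator-like) functions
over a finite measure space implies strong `L¹` convergence:
`∫ |fₙ - f| dμ → 0`. -/
theorem weak_L2_indicator_to_strong_L1 {Ω : Type*} [MeasurableSpace Ω] (μ : Measure Ω)
    [IsFiniteMeasure μ]
    (f : Ω → ℝ) (fn : ℕ → Ω → ℝ)
    (hfm : Measurable f) (hfnm : ∀ n, Measurable (fn n))
    (hf01 : ∀ᵐ x ∂μ, f x = 0 ∨ f x = 1)
    (hfn01 : ∀ n, ∀ᵐ x ∂μ, fn n x = 0 ∨ fn n x = 1)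
    (hweak : ∀ g : Ω → ℝ, MemLp g 2 μ →
      Tendsto (fun n => ∫ x, fn n x * g x ∂μ) atTop (𝓝 (∫ x, f x * g x ∂μ))) :
    Tendsto (fun n => ∫ x, |fn n x - f x| ∂μ) atTop (𝓝 0) := by
  have hfL2 : MemLp f 2 μ := by
    refine MemLp.of_bound hfm.aestronglyMeasurable 1 ?_
    filter_upwards [hf01] with x hx
    rcases hx with h | h <;> simp [h]
  have hfnL2 : ∀ n, MemLp (fn n) 2 μ := by
    intro n
    refine MemLp.of_bound (hfnm n).aestronglyMeasurable 1 ?_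
    filter_upwards [hfn01 n] with x hx
    rcases hx with h | h <;> simp [h]
  have hfi : Integrable f μ := hfL2.integrable one_le_two
  have hfni : ∀ n, Integrable (fn n) μ := fun n => (hfnL2 n).integrable one_le_two
  have hprodi : ∀ n, Integrable (fun x => fn n x * f x) μ := by
    intro n
    refine Integrable.mono' (integrable_const (1:ℝ))
      ((hfnm n).mul hfm).aestronglyMeasurable ?_
    filter_upwards [hf01, hfn01 n] with x h1 h2
    rcases h1 with h | h <;> rcases h2 with h' | h' <;> simp [h, h']
  -- pointwise identity
  have hkey : ∀ n, ∫ x, |fn n x - f x| ∂μ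
      = (∫ x, fn n x ∂μ) + (∫ x, f x ∂μ) - 2 * ∫ x, fn n x * f x ∂μ := by
    intro n
    have hcong : ∫ x, |fn n x - f x| ∂μ
        = ∫ x, fn n x + f x - 2 * (fn n x * f x) ∂μ := by
      refine integral_congr_ae ?_
      filter_upwards [hf01, hfn01 n] with x h1 h2
      rcases h1 with h | h <;> rcases h2 with h' | h' <;> simp [h, h']; norm_num
    have hs := integral_sub (μ := μ) (f := fun x => fn n x + f x)
      (g := fun x => 2 * (fn n x * f x)) ((hfni n).add hfi) ((hprodi n).const_mul 2)
    have ha := integral_add (μ := μ) (f := fn n) (g := f) (hfni n) hfi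
    rw [hcong, hs, ha]; simp only [integral_const_mul]
  have h1 : Tendsto (fun n => ∫ x, fn n x ∂μ) atTop (𝓝 (∫ x, f x ∂μ)) := by
    have := hweak (fun _ => (1 : ℝ)) (memLp_const 1)
    simpa using this
  have h2 : Tendsto (fun n => ∫ x, fn n x * f x ∂μ) atTop (𝓝 (∫ x, f x ∂μ)) := by
    have := hweak f hfL2
    have hff : ∫ x, f x * f x ∂μ = ∫ x, f x ∂μ := by
      refine integral_congr_ae ?_
      filter_upwards [hf01] with x hx
      rcases hx with h | h <;> simp [h]
    rwa [hff] at this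
  have : Tendsto (fun n => (∫ x, fn n x ∂μ) + (∫ x, f x ∂μ) - 2 * ∫ x, fn n x * f x ∂μ)
      atTop (𝓝 ((∫ x, f x ∂μ) + (∫ x, f x ∂μ) - 2 * ∫ x, f x ∂μ)) :=
    (h1.add tendsto_const_nhds).sub (h2.const_mul 2)
  have hlim : (∫ x, f x ∂μ) + (∫ x, f x ∂μ) - 2 * ∫ x, f x ∂μ = 0 := by ring
  rw [hlim] at this
  exact this.congr fun n => (hkey n).symm
end

section
/- Envelope of rescaled tanh profiles. Let (M, dist) be a metric space, let u : M → ℝ be continuous, let α ∈ ℝ and x ∈ M. Consider L := limsup of the function (ε, y) ↦ tanh((u(y) − α)/ε) along the product filter (𝓝[(0,∞)] 0) ×ˢ (𝓝 x), i.e. ε → 0 with ε > 0 and y → x. Then: L = 1 if x belongs to the closure of {y : u(y) > α}; L = −1 if u(x) < α; and L = 0 otherwise (i.e. if u(x) = α and x is not in the closure of {u > α}). -/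
/-!
For fixed `y`, the profile `ε ↦ tanh ((u y - α) / ε)` tends to `sign (u y - α)` as `ε ↓ 0`.
If points with `u y > α` accumulate at `x`, these pointwise limits force the limsup up to its
trivial bound `1`. If `u x < α`, continuity makes `(u y - α) / ε → -∞` jointly, so the limit is
`-1`. Otherwise `u ≤ α` near `x`, so the profiles are `≤ 0` there and vanish at `y = x`.
-/

open Filter Topology

lemma Real.tanh_eq_one_sub_two_div (x : ℝ) : Real.tanh x = 1 - 2 / (Real.exp (2 * x) + 1) := by
  have hx : Real.exp (2 * x) = Real.exp x * Real.exp x := by rw [← Real.exp_add, two_mul]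
  rw [Real.tanh_eq, Real.exp_neg, hx]
  field_simp
  ring

lemma Real.tendsto_tanh_atTop : Tendsto Real.tanh atTop (𝓝 1) := by
  have h : Tendsto (fun x : ℝ => Real.exp (2 * x) + 1) atTop atTop :=
    tendsto_atTop_add_const_right _ _
      (Real.tendsto_exp_atTop.comp (tendsto_id.const_mul_atTop two_pos))
  have := (tendsto_const_nhds (x := (1 : ℝ))).sub (h.const_div_atTop 2)
  rw [sub_zero] at this
  exact this.congr fun x => (Real.tanh_eq_one_sub_two_div x).symm

lemma Real.tendsto_tanh_atBot : Tendsto Real.tanh atBot (𝓝 (-1)) := by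
  simpa [Function.comp_def, Real.tanh_neg] using
    (Real.tendsto_tanh_atTop.comp tendsto_neg_atBot_atTop).neg

lemma Real.tanh_nonpos {x : ℝ} (hx : x ≤ 0) : Real.tanh x ≤ 0 := by
  rw [Real.tanh_eq_sinh_div_cosh]
  exact div_nonpos_of_nonpos_of_nonneg (Real.sinh_nonpos_iff.2 hx) (Real.cosh_pos x).le

lemma Real.tendsto_tanh_div_nhdsGT_zero (c : ℝ) :
    Tendsto (fun ε => Real.tanh (c / ε)) (𝓝[>] 0) (𝓝 (Real.sign c)) := by
  simp_rw [div_eq_mul_inv]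
  rcases lt_trichotomy c 0 with hc | rfl | hc
  · rw [Real.sign_of_neg hc]
    exact Real.tendsto_tanh_atBot.comp (tendsto_inv_nhdsGT_zero.const_mul_atTop_of_neg hc)
  · simp
  · rw [Real.sign_of_pos hc]
    exact Real.tendsto_tanh_atTop.comp (tendsto_inv_nhdsGT_zero.const_mul_atTop hc)

lemma Filter.frequently_prod_of_frequently_eventually {α β : Type*} {la : Filter α}
    {lb : Filter β} [la.NeBot] {p : α × β → Prop} (h : ∃ᶠ b in lb, ∀ᶠ a in la, p (a, b)) :
    ∃ᶠ q in la ×ˢ lb, p q := by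
  have : ∃ᶠ q in lb.curry la, p q.swap :=
    (frequently_curry_iff _).2 (h.mono fun _ hb => hb.frequently)
  rw [prod_comm, frequently_map]
  exact this.filter_mono curry_le_prod

lemma le_limsup_prod_of_frequently_tendsto {α β γ : Type*} [ConditionallyCompleteLinearOrder γ]
    [TopologicalSpace γ] [OrderTopology γ] [DenselyOrdered γ] {la : Filter α} {lb : Filter β}
    [la.NeBot] {f : α × β → γ} {c : γ} (hf : IsBoundedUnder (· ≤ ·) (la ×ˢ lb) f)
    (h : ∃ᶠ b in lb, Tendsto (fun a => f (a, b)) la (𝓝 c)) :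
    c ≤ limsup f (la ×ˢ lb) := by
  refine le_of_forall_lt_imp_le_of_dense fun d hd => le_limsup_of_frequently_le ?_ hf
  exact frequently_prod_of_frequently_eventually (p := fun q => d ≤ f q)
    (h.mono fun _ hb => hb.eventually (eventually_ge_nhds hd))

/-- envelope of rescaled tanh profiles.  For a continuous `u`, a level
`α` and a point `x`, the limsup `L` of `(ε, y) ↦ tanh((u(y) - α)/ε)` as `ε ↓ 0` and
`y → x` satisfies: `L = 1` if `x ∈ closure {u > α}`, `L = -1` if `u(x) < α`, and
`L = 0` if `u(x) = α` and `x ∉ closure {u > α}`. -/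
theorem tanh_profile_envelope {M : Type*} [MetricSpace M]
    (u : M → ℝ) (hu : Continuous u) (α : ℝ) (x : M) :
    (x ∈ closure {y | α < u y} →
      limsup (fun p : ℝ × M => Real.tanh ((u p.2 - α) / p.1))
        ((𝓝[Set.Ioi (0 : ℝ)] 0) ×ˢ 𝓝 x) = 1) ∧
    (u x < α →
      limsup (fun p : ℝ × M => Real.tanh ((u p.2 - α) / p.1))
        ((𝓝[Set.Ioi (0 : ℝ)] 0) ×ˢ 𝓝 x) = -1) ∧
    (u x = α → x ∉ closure {y | α < u y} →
      limsup (fun p : ℝ × M => Real.tanh ((u p.2 - α) / p.1))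
        ((𝓝[Set.Ioi (0 : ℝ)] 0) ×ˢ 𝓝 x) = 0) := by
  set F := (𝓝[Set.Ioi (0 : ℝ)] 0) ×ˢ 𝓝 x
  set f := fun p : ℝ × M => Real.tanh ((u p.2 - α) / p.1)
  have hf_le : IsBoundedUnder (· ≤ ·) F f :=
    isBoundedUnder_of ⟨1, fun p => (Real.tanh_lt_one _).le⟩
  have hf_co : IsCoboundedUnder (· ≤ ·) F f :=
    (isBoundedUnder_of ⟨-1, fun p => (Real.neg_one_lt_tanh _).le⟩).isCoboundedUnder_flip
  refine ⟨fun hx => ?_, fun hx => ?_, fun hx hcl => ?_⟩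
  · refine le_antisymm (limsup_le_of_le hf_co (.of_forall fun p => (Real.tanh_lt_one _).le)) ?_
    refine le_limsup_prod_of_frequently_tendsto hf_le ?_
    refine (mem_closure_iff_frequently.1 hx).mono fun y hy => ?_
    simpa only [Real.sign_of_pos (sub_pos.2 hy)] using Real.tendsto_tanh_div_nhdsGT_zero (u y - α)
  · have : Tendsto (fun p : ℝ × M => (u p.2 - α) * p.1⁻¹) F atBot :=
      (((hu.tendsto x).comp tendsto_snd).sub_const α).neg_mul_atTop (sub_neg.2 hx)
        (tendsto_inv_nhdsGT_zero.comp tendsto_fst)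
    refine Tendsto.limsup_eq ?_
    simpa only [f, div_eq_mul_inv, Function.comp_def] using Real.tendsto_tanh_atBot.comp this
  · refine le_antisymm ?_ (le_limsup_prod_of_frequently_tendsto hf_le ?_)
    · have hux : ∀ᶠ y in 𝓝 x, u y ≤ α := by
        simpa [mem_closure_iff_frequently] using hcl
      refine limsup_le_of_le hf_co ?_
      filter_upwards [tendsto_fst.eventually self_mem_nhdsWithin, tendsto_snd.eventually hux]
        with p hp hpu
      exact Real.tanh_nonpos (div_nonpos_of_nonpos_of_nonneg (sub_nonpos.2 hpu) hp.le)
    · refine ((frequently_pure.2 rfl).filter_mono (pure_le_nhds x)).mono fun y hy => ?_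
      subst hy
      simp [f, hx]
end
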